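/- Per-type VN derivative formula: Let γ be a variable-node type whose generator matrix G_γ (of size k_γ × q_γ over GF(2)) has rank k_γ and whose row space has minimum Hamming weight at least 2, with columns typed by E and no punctured bits. Then for every ε ∈ (0,1) and all l,e ∈ E with q_{γ,l} > 0, the partial derivative of I_{EV,l}^{(γ)}(·,ε) with respect to its e-th argument, evaluated at the all-ones point I = (1,…,1), equals (1/q_{γ,l}) Σ_{u=1}^{k_γ} χ_{2,u}^{(γ)}(l,e) ε^u. In particular, it is 0 whenever the local code of γ has minimum distance greater than 2. -/

import Mathlib

open scoped Classical

noncomputable section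

namespace MET

/-- Hamming weight of a binary vector. -/
def hWeight {m : ℕ} (x : Fin m → ZMod 2) : ℕ :=
  (Finset.univ.filter fun i => x i ≠ 0).card

/-- The row space of `G` (the local code) has minimum Hamming weight at least 2. -/
def HasMinDistGE2 {k q : ℕ} (G : Matrix (Fin k) (Fin q) (ZMod 2)) : Prop :=
  ∀ x : Fin k → ZMod 2, Matrix.vecMul x G ≠ 0 → 2 ≤ hWeight (Matrix.vecMul x G)

/-- The row space of `G` has minimum Hamming weight exactly 2. -/
def HasMinDistEq2 {k q : ℕ} (G : Matrix (Fin k) (Fin q) (ZMod 2)) : Prop :=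
  HasMinDistGE2 G ∧ ∃ x : Fin k → ZMod 2, hWeight (Matrix.vecMul x G) = 2

/-- The weight-2 vector supported on `{i,j}`. -/
def wt2vec {q : ℕ} (i j : Fin q) : Fin q → ZMod 2 :=
  fun r => if r = i ∨ r = j then 1 else 0

/-- Number of columns of edge type `l`. -/
def colCount {q n : ℕ} (τ : Fin q → Fin n) (l : Fin n) : ℕ :=
  (Finset.univ.filter fun j => τ j = l).card

/-- Rank of the matrix formed by the columns of `G` indexed by `A` together with the columns
of the `k × k` identity matrix indexed by `T`. -/
def colRank {k q : ℕ} (G : Matrix (Fin k) (Fin q) (ZMod 2))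
    (A : Finset (Fin q)) (T : Finset (Fin k)) : ℕ :=
  Matrix.rank (Matrix.of fun (i : Fin k) (j : {x // x ∈ A} ⊕ {x // x ∈ T}) =>
    Sum.elim (fun a => G i a.1) (fun t => if i = t.1 then (1 : ZMod 2) else 0) j)

/-- Multi-type split information function `ẽ_{g;u}` of a VN generator matrix. -/
def eTilde {n k q : ℕ} (G : Matrix (Fin k) (Fin q) (ZMod 2)) (τ : Fin q → Fin n)
    (g : Fin n → ℕ) (u : ℕ) : ℕ :=
  ∑ A ∈ Finset.univ.filter (fun A : Finset (Fin q) =>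
      ∀ l, (A.filter fun j => τ j = l).card = g l),
    ∑ T ∈ Finset.univ.filter (fun T : Finset (Fin k) => T.card = u),
      colRank G A T

/-- Multi-type information function `ẽ_g` of a CN generator matrix. -/
def eTildeC {n h s : ℕ} (G : Matrix (Fin h) (Fin s) (ZMod 2)) (τ : Fin s → Fin n)
    (g : Fin n → ℕ) : ℕ :=
  ∑ A ∈ Finset.univ.filter (fun A : Finset (Fin s) =>
      ∀ l, (A.filter fun j => τ j = l).card = g l),
    colRank G A ∅

/-- `χ_{2,u}(l,m)`: ordered pairs of distinct columns of types `l,m` supporting a weight-2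
codeword generated by a weight-`u` input word. -/
def chi2 {n k q : ℕ} (G : Matrix (Fin k) (Fin q) (ZMod 2)) (τ : Fin q → Fin n)
    (u : ℕ) (l m : Fin n) : ℕ :=
  (Finset.univ.filter fun p : Fin q × Fin q =>
    p.1 ≠ p.2 ∧ τ p.1 = l ∧ τ p.2 = m ∧
      ∃ x : Fin k → ZMod 2, hWeight x = u ∧ Matrix.vecMul x G = wt2vec p.1 p.2).card

/-- `ξ_2(l,m)`: ordered pairs of distinct coordinates of types `l,m` supporting a weight-2
codeword of the row space. -/
def xi2 {n h s : ℕ} (G : Matrix (Fin h) (Fin s) (ZMod 2)) (τ : Fin s → Fin n)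
    (l m : Fin n) : ℕ :=
  (Finset.univ.filter fun p : Fin s × Fin s =>
    p.1 ≠ p.2 ∧ τ p.1 = l ∧ τ p.2 = m ∧
      ∃ x : Fin h → ZMod 2, Matrix.vecMul x G = wt2vec p.1 p.2).card

/-- Range of the tuple `t`: `0 ≤ t l ≤ q l` for `l ≠ e` and `0 ≤ t e ≤ q e - 1`. -/
def tRange {n : ℕ} (q : Fin n → ℕ) (e : Fin n) : Finset (Fin n → ℕ) :=
  Fintype.piFinset fun l => Finset.range (if l = e then q l else q l + 1)

/-- The coefficient `a^{(γ,e)}_{t,z}` of the VN EXIT function. -/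
def aVN {n k q : ℕ} (G : Matrix (Fin k) (Fin q) (ZMod 2)) (τ : Fin q → Fin n)
    (e : Fin n) (t : Fin n → ℕ) (z : ℕ) : ℝ :=
  ((colCount τ e - t e : ℕ) : ℝ) *
      (eTilde G τ (fun l => colCount τ l - t l) (k - z) : ℝ)
    - ((t e + 1 : ℕ) : ℝ) *
      (eTilde G τ (fun l => colCount τ l - t l - (if l = e then 1 else 0)) (k - z) : ℝ)

/-- The coefficient `a^{(δ,e)}_{t}` of the CN EXIT function. -/
def aCN {n h s : ℕ} (G : Matrix (Fin h) (Fin s) (ZMod 2)) (τ : Fin s → Fin n)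
    (e : Fin n) (t : Fin n → ℕ) : ℝ :=
  ((colCount τ e - t e : ℕ) : ℝ) *
      (eTildeC G τ (fun l => colCount τ l - t l) : ℝ)
    - ((t e + 1 : ℕ) : ℝ) *
      (eTildeC G τ (fun l => colCount τ l - t l - (if l = e then 1 else 0)) : ℝ)

/-- Per-type VN EXIT function `I_{EV,e}^{(γ)}(I, ε)`. -/
def IEV {n k q : ℕ} (G : Matrix (Fin k) (Fin q) (ZMod 2)) (τ : Fin q → Fin n)
    (e : Fin n) (I : Fin n → ℝ) (ε : ℝ) : ℝ :=
  1 - (1 / (colCount τ e : ℝ)) *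
    ∑ z ∈ Finset.range (k + 1), ε ^ z * (1 - ε) ^ (k - z) *
      ∑ t ∈ tRange (colCount τ) e,
        (∏ l, (1 - I l) ^ t l * (I l) ^ (colCount τ l - t l - (if l = e then 1 else 0))) *
          aVN G τ e t z

/-- Per-type CN EXIT function `I_{EC,e}^{(δ)}(I)`. -/
def IEC {n h s : ℕ} (G : Matrix (Fin h) (Fin s) (ZMod 2)) (τ : Fin s → Fin n)
    (e : Fin n) (I : Fin n → ℝ) : ℝ :=
  1 - (1 / (colCount τ e : ℝ)) *
    ∑ t ∈ tRange (colCount τ) e,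
      (∏ l, (1 - I l) ^ t l * (I l) ^ (colCount τ l - t l - (if l = e then 1 else 0))) *
        aCN G τ e t

/-- A variable node type: a `k × q` generator matrix over `GF(2)` with a typing of its
columns by edge types (no punctured bits). -/
structure VNType (n : ℕ) where
  k : ℕ
  q : ℕ
  G : Matrix (Fin k) (Fin q) (ZMod 2)
  τ : Fin q → Fin n

/-- A check node type: an `h × s` generator matrix over `GF(2)` with a typing of its
columns by edge types. -/
structure CNType (n : ℕ) where
  h : ℕ
  s : ℕ
  G : Matrix (Fin h) (Fin s) (ZMod 2)
  τ : Fin s → Fin n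

/-- The variable-node side of a MET D-GLDPC ensemble. -/
structure VNSide (n : ℕ) where
  nV : ℕ
  vn : Fin nV → VNType n
  lam : Fin nV → Fin n → ℝ
  lam_nonneg : ∀ γ l, 0 ≤ lam γ l
  lam_sum : ∀ l, ∑ γ, lam γ l = 1
  lam_pos_iff : ∀ γ l, 0 < lam γ l ↔ 0 < colCount (vn γ).τ l

/-- The check-node side of a MET D-GLDPC ensemble. -/
structure CNSide (n : ℕ) where
  nC : ℕ
  cn : Fin nC → CNType n
  rho : Fin nC → Fin n → ℝ
  rho_nonneg : ∀ δ l, 0 ≤ rho δ l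
  rho_sum : ∀ l, ∑ δ, rho δ l = 1
  rho_pos_iff : ∀ δ l, 0 < rho δ l ↔ 0 < colCount (cn δ).τ l

/-- A MET D-GLDPC ensemble. -/
structure Ensemble (n : ℕ) extends VNSide n, CNSide n

/-- All VN local codes have full-rank generator matrix and minimum distance at least 2. -/
def VNSide.Good {n : ℕ} (V : VNSide n) : Prop :=
  ∀ γ, ((V.vn γ).G).rank = (V.vn γ).k ∧ HasMinDistGE2 (V.vn γ).G

/-- All CN local codes have full-rank generator matrix and minimum distance at least 2. -/
def CNSide.Good {n : ℕ} (C : CNSide n) : Prop :=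
  ∀ δ, ((C.cn δ).G).rank = (C.cn δ).h ∧ HasMinDistGE2 (C.cn δ).G

/-- The matrix `P(ε)` with entries `P^{l,m}(ε)`. -/
def Pmat {n : ℕ} (V : VNSide n) (ε : ℝ) : Matrix (Fin n) (Fin n) ℝ :=
  Matrix.of fun l m =>
    ∑ γ, if HasMinDistEq2 (V.vn γ).G then
      (V.lam γ l / (colCount (V.vn γ).τ l : ℝ)) *
        ∑ u ∈ Finset.Icc 1 (V.vn γ).k, (chi2 (V.vn γ).G (V.vn γ).τ u l m : ℝ) * ε ^ u
    else 0

/-- The matrix `C` with entries `C^{l,m}`. -/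
def Cmat {n : ℕ} (C : CNSide n) : Matrix (Fin n) (Fin n) ℝ :=
  Matrix.of fun l m =>
    ∑ δ, if HasMinDistEq2 (C.cn δ).G then
      (C.rho δ l / (colCount (C.cn δ).τ l : ℝ)) * (xi2 (C.cn δ).G (C.cn δ).τ l m : ℝ)
    else 0

/-- Aggregate VN EXIT function `I_{EV,e}(I,ε)`. -/
def IEVagg {n : ℕ} (V : VNSide n) (e : Fin n) (I : Fin n → ℝ) (ε : ℝ) : ℝ :=
  ∑ γ ∈ Finset.univ.filter (fun γ => 0 < V.lam γ e),
    V.lam γ e * IEV (V.vn γ).G (V.vn γ).τ e I ε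

/-- Aggregate CN EXIT function `I_{EC,e}(I)`. -/
def IECagg {n : ℕ} (C : CNSide n) (e : Fin n) (I : Fin n → ℝ) : ℝ :=
  ∑ δ ∈ Finset.univ.filter (fun δ => 0 < C.rho δ e),
    C.rho δ e * IEC (C.cn δ).G (C.cn δ).τ e I

/-- The EXIT recursion `f(·,ε)`. -/
def exitMap {n : ℕ} (E : Ensemble n) (ε : ℝ) (I : Fin n → ℝ) : Fin n → ℝ :=
  fun e => IEVagg E.toVNSide e (fun m => IECagg E.toCNSide m I) ε

/-- Local stability of the fixed point `1` of the EXIT recursion. -/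
def LocallyStable {n : ℕ} (E : Ensemble n) (ε : ℝ) : Prop :=
  ∃ U : Set (Fin n → ℝ), IsOpen U ∧ (fun _ => (1 : ℝ)) ∈ U ∧
    ∀ I ∈ U ∩ Set.Icc (fun _ => (0 : ℝ)) (fun _ => (1 : ℝ)),
      Filter.Tendsto (fun m => (exitMap E ε)^[m] I) Filter.atTop (nhds fun _ => (1 : ℝ))

/-- Spectral radius of a real square matrix: the maximum modulus of its complex
eigenvalues. -/
def specRad {m : ℕ} (A : Matrix (Fin m) (Fin m) ℝ) : ℝ :=
  (spectralRadius ℂ (A.map fun x : ℝ => (x : ℂ))).toReal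

/-! Restricting `I` to the line `I = update 1 e x`, the monomial of a tuple `t` is
`(1 - x)^{t_e} x^{…} · ∏_{m ≠ e} 0^{t_m}`, so at `x = 1` only `t = 0` and `t = δ_e` have a
nonzero derivative. With full rank and minimum distance `≥ 2`, a column rank `colRank G A T`
equals `k` as soon as `|Aᶜ| ≤ 1`, and for `Aᶜ = {i, j}` it drops by one exactly when some message
vanishing on `T` encodes the weight-2 word on `{i, j}`. Hence `a_{0,z} = 0`, while `a_{δ_e,z}`
counts the messages `x` encoding weight-2 words on columns of types `l`, `e`, each weighted by
`C(k - wt x, k - z)`; summing over `z` against `ε^z (1-ε)^{k-z}` turns this weight into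
`ε^{wt x}` by the binomial theorem. -/
open Finset

section HammingWeight

variable {m : ℕ}

lemma hWeight_le (x : Fin m → ZMod 2) : hWeight x ≤ m :=
  (card_filter_le _ _).trans_eq (card_fin m)

lemma one_le_hWeight {x : Fin m → ZMod 2} (hx : x ≠ 0) : 1 ≤ hWeight x := by
  obtain ⟨i, hi⟩ := Function.ne_iff.1 hx
  exact card_pos.2 ⟨i, mem_filter.2 ⟨mem_univ i, hi⟩⟩

lemma card_filter_eq_zero_eq_sub_hWeight (x : Fin m → ZMod 2) :
    #{i | x i = 0} = m - hWeight x := by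
  have := card_filter_add_card_filter_not (s := univ) (fun i => x i = 0)
  rw [card_univ, Fintype.card_fin] at this
  rw [hWeight]
  simp only [ne_eq]
  omega

lemma wt2vec_ne_zero (i j : Fin m) : wt2vec i j ≠ 0 :=
  Function.ne_iff.2 ⟨i, by simp [wt2vec]⟩

lemma support_wt2vec (i j : Fin m) : ({r | wt2vec i j r ≠ 0} : Finset (Fin m)) = {i, j} := by
  ext r; simp [wt2vec]; tauto

lemma eq_of_filter_ne_zero_eq {x y : Fin m → ZMod 2}
    (h : ({i | x i ≠ 0} : Finset (Fin m)) = ({i | y i ≠ 0} : Finset (Fin m))) : x = y := by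
  funext r
  have hr : x r ≠ 0 ↔ y r ≠ 0 := by simpa using congrArg (r ∈ ·) h
  generalize x r = a, y r = b at hr
  revert a b
  decide

lemma hWeight_wt2vec {i j : Fin m} (hij : i ≠ j) : hWeight (wt2vec i j) = 2 := by
  rw [hWeight, support_wt2vec, card_pair hij]

end HammingWeight

lemma vecMul_injective_of_rank_eq {K ι κ : Type*} [Field K] [Fintype ι] [Fintype κ]
    {G : Matrix ι κ K} (hrk : G.rank = Fintype.card ι) : Function.Injective G.vecMul :=
  Matrix.vecMul_injective_iff.2 <| linearIndependent_iff_card_eq_finrank_span.2 <| by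
    rw [Set.finrank, ← Matrix.rank_eq_finrank_span_row, hrk]

section Codewords

variable {k q : ℕ} {G : Matrix (Fin k) (Fin q) (ZMod 2)}

lemma vecMul_eq_zero_or_wt2vec (hmd : HasMinDistGE2 G) {x : Fin k → ZMod 2} {i j : Fin q}
    (hx : ∀ r, r ≠ i → r ≠ j → Matrix.vecMul x G r = 0) :
    Matrix.vecMul x G = 0 ∨ (i ≠ j ∧ Matrix.vecMul x G = wt2vec i j) := by
  by_cases hc : Matrix.vecMul x G = 0
  · exact Or.inl hc
  have hsupp : ({r | Matrix.vecMul x G r ≠ 0} : Finset (Fin q)) ⊆ {i, j} := fun r hr => by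
    by_contra h
    simp only [mem_insert, mem_singleton, not_or] at h
    exact (mem_filter.1 hr).2 (hx r h.1 h.2)
  have hsupp_eq := eq_of_subset_of_card_le hsupp ((card_le_two).trans (hmd x hc))
  have hij : i ≠ j := by
    rintro rfl
    have := hmd x hc
    rw [hWeight, hsupp_eq, pair_eq_singleton, card_singleton] at this
    omega
  exact Or.inr ⟨hij, eq_of_filter_ne_zero_eq (hsupp_eq.trans (support_wt2vec i j).symm)⟩

end Codewords

lemma finrank_eq_card_of_mem_iff {V : Type*} [AddCommGroup V] [Module (ZMod 2) V]
    [Module.Finite (ZMod 2) V] {K : Submodule (ZMod 2) V} {S : Finset V} (h0 : 0 ∉ S)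
    (hS : #S ≤ 1) (hK : ∀ x, x ∈ K ↔ x = 0 ∨ x ∈ S) : Module.finrank (ZMod 2) K = #S := by
  have hcard := Module.natCard_eq_pow_finrank (K := ZMod 2) (V := K)
  rw [Nat.card_zmod, Nat.subtype_card (insert 0 S) (by simp [hK]), card_insert_of_notMem h0]
    at hcard
  refine Nat.pow_right_injective le_rfl (hcard.symm.trans ?_)
  interval_cases #S <;> rfl

section ColRank

variable {k q : ℕ} (G : Matrix (Fin k) (Fin q) (ZMod 2)) (A : Finset (Fin q))
  (T : Finset (Fin k))

def colMatrix : Matrix (Fin k) ({x // x ∈ A} ⊕ {x // x ∈ T}) (ZMod 2) :=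
  Matrix.of fun i j => Sum.elim (fun a => G i a.1) (fun t => if i = t.1 then 1 else 0) j

def colKernel : Submodule (ZMod 2) (Fin k → ZMod 2) :=
  LinearMap.ker (colMatrix G A T).vecMulLinear

lemma colRank_add_finrank_colKernel :
    colRank G A T + Module.finrank (ZMod 2) (colKernel G A T) = k := by
  have h := LinearMap.finrank_range_add_finrank_ker (colMatrix G A T).vecMulLinear
  rw [Module.finrank_pi, Fintype.card_fin] at h
  refine Eq.trans ?_ h
  rw [colRank, ← Matrix.rank_transpose, Matrix.rank, Matrix.mulVecLin_transpose]
  rfl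

variable {G A T}

lemma mem_colKernel {x : Fin k → ZMod 2} :
    x ∈ colKernel G A T ↔ (∀ a ∈ A, Matrix.vecMul x G a = 0) ∧ ∀ t ∈ T, x t = 0 := by
  simp [colKernel, funext_iff, colMatrix, Matrix.vecMul, dotProduct, mul_ite]

lemma colRank_of_card_compl_le_one (hrk : G.rank = k) (hmd : HasMinDistGE2 G)
    (hA : #Aᶜ ≤ 1) (T : Finset (Fin k)) : colRank G A T = k := by
  have hK : ∀ x, x ∈ colKernel G A T ↔ x = 0 ∨ x ∈ (∅ : Finset (Fin k → ZMod 2)) := by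
    refine fun x => ⟨fun hx => Or.inl ?_, by simp +contextual⟩
    have hsupp : ({r | Matrix.vecMul x G r ≠ 0} : Finset (Fin q)) ⊆ Aᶜ := fun r hr =>
      mem_compl.2 fun hrA => (mem_filter.1 hr).2 ((mem_colKernel.1 hx).1 r hrA)
    have hzero : Matrix.vecMul x G = 0 := by
      by_contra hne
      have := (hmd x hne).trans ((card_le_card hsupp).trans hA)
      omega
    exact vecMul_injective_of_rank_eq (hrk.trans (Fintype.card_fin k).symm)
      (hzero.trans (Matrix.zero_vecMul G).symm)
  have := colRank_add_finrank_colKernel G A T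
  rw [finrank_eq_card_of_mem_iff (notMem_empty 0) (by simp) hK, card_empty] at this
  exact this

lemma colRank_compl_pair_add_card (hrk : G.rank = k) (hmd : HasMinDistGE2 G) {i j : Fin q}
    (T : Finset (Fin k)) :
    colRank G {i, j}ᶜ T + #{x | Matrix.vecMul x G = wt2vec i j ∧ ∀ t ∈ T, x t = 0} = k := by
  have hinj := vecMul_injective_of_rank_eq (hrk.trans (Fintype.card_fin k).symm)
  have h0 : (0 : Fin k → ZMod 2) ∉ ({x | Matrix.vecMul x G = wt2vec i j ∧ ∀ t ∈ T, x t = 0} :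
      Finset _) := by
    simpa using (wt2vec_ne_zero i j).symm
  have hS : #({x | Matrix.vecMul x G = wt2vec i j ∧ ∀ t ∈ T, x t = 0} : Finset _) ≤ 1 :=
    card_le_one.2 fun x hx y hy => hinj ((mem_filter.1 hx).2.1.trans (mem_filter.1 hy).2.1.symm)
  have hK : ∀ x, x ∈ colKernel G {i, j}ᶜ T ↔
      x = 0 ∨ x ∈ ({x | Matrix.vecMul x G = wt2vec i j ∧ ∀ t ∈ T, x t = 0} : Finset _) := by
    intro x
    simp only [mem_colKernel, mem_compl, mem_insert, mem_singleton, not_or, mem_filter,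
      mem_univ, true_and, and_imp]
    constructor
    · rintro ⟨hA, hT⟩
      rcases vecMul_eq_zero_or_wt2vec hmd hA with hx | ⟨-, hx⟩
      · exact Or.inl (hinj (hx.trans (Matrix.zero_vecMul G).symm))
      · exact Or.inr ⟨hx, hT⟩
    · rintro (rfl | ⟨hx, hT⟩)
      · simp
      · exact ⟨fun a hai haj => by simp [hx, wt2vec, hai, haj], hT⟩
  have := colRank_add_finrank_colKernel G {i, j}ᶜ T
  rwa [finrank_eq_card_of_mem_iff h0 hS hK] at this

end ColRank

section SumOverIdentityColumns

variable {k q : ℕ} {G : Matrix (Fin k) (Fin q) (ZMod 2)}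

lemma card_filter_card_eq (k u : ℕ) : #({T | #T = u} : Finset (Finset (Fin k))) = k.choose u := by
  rw [← powerset_univ, ← powersetCard_eq_filter, card_powersetCard, card_univ, Fintype.card_fin]

lemma card_filter_card_eq_and_forall_eq_zero (u : ℕ) (x : Fin k → ZMod 2) :
    #({T | #T = u ∧ ∀ t ∈ T, x t = 0} : Finset (Finset (Fin k))) = (k - hWeight x).choose u := by
  rw [← card_filter_eq_zero_eq_sub_hWeight, ← card_powersetCard]
  congr 1
  ext T
  simp [mem_powersetCard, subset_iff, and_comm]

lemma sum_colRank_of_card_compl_le_one (hrk : G.rank = k) (hmd : HasMinDistGE2 G)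
    {A : Finset (Fin q)} (hA : #Aᶜ ≤ 1) (u : ℕ) :
    ∑ T ∈ {T | #T = u}, colRank G A T = k.choose u * k := by
  rw [sum_congr rfl fun T _ => colRank_of_card_compl_le_one hrk hmd hA T, sum_const,
    card_filter_card_eq, smul_eq_mul]

lemma sum_colRank_compl_pair_add_sum (hrk : G.rank = k) (hmd : HasMinDistGE2 G) (i j : Fin q)
    (u : ℕ) :
    ∑ T ∈ {T | #T = u}, colRank G {i, j}ᶜ T
      + ∑ x ∈ {x | Matrix.vecMul x G = wt2vec i j}, (k - hWeight x).choose u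
      = k.choose u * k := by
  have hswap := sum_card_bipartiteAbove_eq_sum_card_bipartiteBelow
    (s := ({T | #T = u} : Finset (Finset (Fin k))))
    (t := ({x | Matrix.vecMul x G = wt2vec i j} : Finset (Fin k → ZMod 2)))
    (r := fun T x => ∀ t ∈ T, x t = 0)
  simp only [bipartiteAbove, bipartiteBelow, filter_filter] at hswap
  simp only [← card_filter_card_eq_and_forall_eq_zero, ← hswap, ← sum_add_distrib,
    colRank_compl_pair_add_card hrk hmd, sum_const, card_filter_card_eq, smul_eq_mul]

end SumOverIdentityColumns

section TypeProfiles

variable {n q : ℕ} (τ : Fin q → Fin n)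

lemma count_map_val (B : Finset (Fin q)) (m : Fin n) :
    (B.val.map τ).count m = #(B.filter (τ · = m)) := by
  simp [Multiset.count_map, card_def, eq_comm]

lemma count_map_univ_val (m : Fin n) : (univ.val.map τ).count m = colCount τ m :=
  count_map_val τ univ m

lemma card_filter_add_card_filter_compl (A : Finset (Fin q)) (m : Fin n) :
    #(A.filter (τ · = m)) + #(Aᶜ.filter (τ · = m)) = colCount τ m := by
  rw [colCount, ← card_filter_add_card_filter_not (s := {j | τ j = m}) (· ∈ A)]
  congr 1 <;> (congr 1; ext; simp [and_comm])

lemma forall_card_filter_eq_sub_iff {D : Multiset (Fin n)} (hD : D ≤ univ.val.map τ)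
    (A : Finset (Fin q)) :
    (∀ m, #(A.filter (τ · = m)) = colCount τ m - D.count m) ↔ Aᶜ.val.map τ = D := by
  rw [Multiset.ext]
  refine forall_congr' fun m => ?_
  have hsplit := card_filter_add_card_filter_compl τ A m
  have hDm : D.count m ≤ colCount τ m :=
    (Multiset.le_iff_count.1 hD m).trans_eq (count_map_univ_val τ m)
  rw [count_map_val]
  omega

lemma map_val_eq_singleton_iff {B : Finset (Fin q)} {e : Fin n} :
    B.val.map τ = {e} ↔ ∃ j, τ j = e ∧ B = {j} := by
  simp [Multiset.map_eq_singleton, val_eq_singleton_iff, and_comm]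

lemma map_val_eq_pair_iff {B : Finset (Fin q)} {e l : Fin n} :
    B.val.map τ = {e, l} ↔ ∃ i j, i ≠ j ∧ τ i = e ∧ τ j = l ∧ B = {i, j} := by
  constructor
  · intro h
    obtain ⟨i, hi, hie, hrest⟩ := (Multiset.map_eq_cons τ B.val {l} e).2 h
    obtain ⟨j, hj, hjl⟩ := Multiset.map_eq_singleton.1 hrest
    have hB : B.val = i ::ₘ {j} := by rw [← hj, Multiset.cons_erase hi]
    have hij : i ≠ j := by
      rintro rfl
      have := B.nodup
      rw [hB] at this
      simp at this
    refine ⟨i, j, hij, hie, hjl, val_inj.1 ?_⟩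
    rw [hB, insert_val_of_notMem (by simpa using hij), singleton_val]
  · rintro ⟨i, j, hij, rfl, rfl, rfl⟩
    rw [insert_val_of_notMem (by simpa using hij), singleton_val, Multiset.map_cons,
      Multiset.map_singleton]
    rfl

end TypeProfiles

section SplitInformation

variable {n k q : ℕ} {G : Matrix (Fin k) (Fin q) (ZMod 2)} {τ : Fin q → Fin n}

def typedPairs (τ : Fin q → Fin n) (e l : Fin n) : Finset (Fin q × Fin q) :=
  {p | p.1 ≠ p.2 ∧ τ p.1 = e ∧ τ p.2 = l}

/-- `∑_u χ_{2,u}(e,l) f(u)` written pair by pair: for full-rank `G` each pair carries at most one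
message `x`. -/
def weight2Sum {M : Type*} [AddCommMonoid M] (G : Matrix (Fin k) (Fin q) (ZMod 2))
    (τ : Fin q → Fin n) (e l : Fin n) (f : ℕ → M) : M :=
  ∑ p ∈ typedPairs τ e l, ∑ x ∈ {x | Matrix.vecMul x G = wt2vec p.1 p.2}, f (hWeight x)

lemma card_typedPairs (e l : Fin n) :
    #(typedPairs τ e l) = (colCount τ e - if e = l then 1 else 0) * colCount τ l := by
  by_cases hel : e = l
  · subst hel
    have : typedPairs τ e e = ({j | τ j = e} : Finset (Fin q)).offDiag := by
      ext p; simp [typedPairs, mem_offDiag]; tauto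
    rw [this, offDiag_card, if_pos rfl, Nat.sub_one_mul]
    rfl
  · have : typedPairs τ e l
        = (({j | τ j = e} : Finset (Fin q)) ×ˢ ({j | τ j = l} : Finset (Fin q)) : Finset _) := by
      ext p
      simp only [typedPairs, mem_filter, mem_univ, true_and, mem_product]
      exact ⟨fun h => h.2, fun h => ⟨fun hp => hel (h.1.symm.trans (hp ▸ h.2)), h⟩⟩
    rw [this, card_product, if_neg hel, Nat.sub_zero]
    rfl

lemma eTilde_eq_sum_compl {D : Multiset (Fin n)} (hD : D ≤ univ.val.map τ) (u : ℕ) :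
    eTilde G τ (fun m => colCount τ m - D.count m) u
      = ∑ B ∈ {B : Finset (Fin q) | B.val.map τ = D}, ∑ T ∈ {T | #T = u}, colRank G Bᶜ T := by
  rw [eTilde, filter_congr fun A _ => forall_card_filter_eq_sub_iff τ hD A]
  exact sum_nbij' compl compl (by simp) (by simp) (by simp) (by simp) (by simp)

lemma eTilde_colCount (hrk : G.rank = k) (hmd : HasMinDistGE2 G) (u : ℕ) :
    eTilde G τ (colCount τ) u = k.choose u * k := by
  have h := eTilde_eq_sum_compl (G := G) (Multiset.zero_le (univ.val.map τ)) u
  simp only [Multiset.count_zero, Nat.sub_zero, Multiset.map_eq_zero, val_eq_zero,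
    filter_eq', mem_univ, if_true, sum_singleton, compl_empty] at h
  rw [h, sum_colRank_of_card_compl_le_one hrk hmd (by simp)]

lemma eTilde_colCount_sub_single (hrk : G.rank = k) (hmd : HasMinDistGE2 G) {e : Fin n}
    (he : 1 ≤ colCount τ e) (u : ℕ) :
    eTilde G τ (fun m => colCount τ m - if m = e then 1 else 0) u
      = colCount τ e * (k.choose u * k) := by
  obtain ⟨j, hj⟩ := card_pos.1 he
  have hD : {e} ≤ univ.val.map τ :=
    Multiset.singleton_le.2 (Multiset.mem_map.2 ⟨j, mem_univ_val j, (mem_filter.1 hj).2⟩)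
  have hsingles : ({B | B.val.map τ = {e}} : Finset (Finset (Fin q)))
      = ({j | τ j = e} : Finset (Fin q)).map ⟨singleton, singleton_injective⟩ := by
    ext B; simp [map_val_eq_singleton_iff τ, eq_comm]
  have h := eTilde_eq_sum_compl (G := G) hD u
  simp only [Multiset.count_singleton] at h
  rw [h, hsingles, sum_map]
  simp only [Function.Embedding.coeFn_mk]
  rw [sum_congr rfl fun j _ => sum_colRank_of_card_compl_le_one hrk hmd (by simp) u, sum_const,
    smul_eq_mul]
  rfl

variable (τ) in
lemma card_filter_typedPairs_eq {e l : Fin n} {B : Finset (Fin q)} (hB : B.val.map τ = {e, l}) :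
    #{p ∈ typedPairs τ e l | {p.1, p.2} = B} = 1 + if e = l then 1 else 0 := by
  obtain ⟨i, j, hij, hi, hj, rfl⟩ := (map_val_eq_pair_iff τ).1 hB
  have hfiber : {p ∈ typedPairs τ e l | ({p.1, p.2} : Finset (Fin q)) = {i, j}}
      = ({(i, j), (j, i)} : Finset (Fin q × Fin q)).filter (fun p => τ p.1 = e ∧ τ p.2 = l) := by
    ext p
    simp only [typedPairs, mem_filter, mem_univ, true_and, mem_insert, mem_singleton,
      ← coe_inj, coe_pair, Set.pair_eq_pair_iff, Prod.ext_iff]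
    constructor
    · rintro ⟨⟨-, hpe, hpl⟩, hp⟩
      exact ⟨hp, hpe, hpl⟩
    · rintro ⟨⟨h1, h2⟩ | ⟨h1, h2⟩, hpe, hpl⟩ <;> refine ⟨⟨?_, hpe, hpl⟩, by simp [h1, h2]⟩ <;>
        simp [h1, h2, hij, Ne.symm hij]
  rw [hfiber, filter_insert, filter_singleton, if_pos (⟨hi, hj⟩ : τ i = e ∧ τ j = l)]
  by_cases hel : e = l
  · subst hel
    rw [if_pos (⟨hj, hi⟩ : τ j = e ∧ τ i = e), card_pair (by simp [hij]), if_pos rfl]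
  · rw [if_neg fun h : τ j = e ∧ τ i = l => hel (h.1.symm.trans hj), if_neg hel]
    rfl

variable (τ) in
lemma sum_typedPairs_eq_smul_sum {M : Type*} [AddCommMonoid M] (e l : Fin n)
    (f : Finset (Fin q) → M) :
    ∑ p ∈ typedPairs τ e l, f {p.1, p.2}
      = (1 + if e = l then 1 else 0) • ∑ B ∈ {B : Finset (Fin q) | B.val.map τ = {e, l}}, f B := by
  have hmaps : ∀ p ∈ typedPairs τ e l,
      ({p.1, p.2} : Finset (Fin q)) ∈ ({B | B.val.map τ = {e, l}} : Finset _) := fun p hp => by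
    simp only [typedPairs, mem_filter, mem_univ, true_and] at hp
    simpa using (map_val_eq_pair_iff τ).2 ⟨p.1, p.2, hp.1, hp.2.1, hp.2.2, rfl⟩
  rw [← sum_fiberwise_of_maps_to' hmaps, smul_sum]
  refine sum_congr rfl fun B hB => ?_
  rw [sum_const, card_filter_typedPairs_eq τ (mem_filter.1 hB).2]

lemma eTilde_colCount_sub_pair (hrk : G.rank = k) (hmd : HasMinDistGE2 G) {e l : Fin n}
    (hD : {e, l} ≤ univ.val.map τ) (u : ℕ) :
    (1 + if e = l then 1 else 0) *
        eTilde G τ (fun m => colCount τ m - (if m = e then 1 else 0) - if m = l then 1 else 0) u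
      + weight2Sum G τ e l (fun w => (k - w).choose u)
      = #(typedPairs τ e l) * (k.choose u * k) := by
  have hprofile : (fun m => colCount τ m - (if m = e then 1 else 0) - if m = l then 1 else 0)
      = fun m => colCount τ m - Multiset.count m {e, l} := by
    funext m
    simp only [Multiset.insert_eq_cons, Multiset.count_cons, Multiset.count_singleton]
    split_ifs <;> omega
  rw [hprofile, eTilde_eq_sum_compl hD, ← smul_eq_mul, ← sum_typedPairs_eq_smul_sum, weight2Sum,
    ← sum_add_distrib, ← smul_eq_mul, ← sum_const]
  exact sum_congr rfl fun p _ => sum_colRank_compl_pair_add_sum hrk hmd p.1 p.2 u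

end SplitInformation

section Coefficients

variable {n k q : ℕ} {G : Matrix (Fin k) (Fin q) (ZMod 2)} {τ : Fin q → Fin n}

lemma one_le_colCount_of_le {e : Fin n} {D : Multiset (Fin n)} (he : e ∈ D)
    (hD : D ≤ univ.val.map τ) : 1 ≤ colCount τ e :=
  (Multiset.one_le_count_iff_mem.2 he).trans
    ((Multiset.le_iff_count.1 hD e).trans_eq (count_map_univ_val τ e))

lemma aVN_zero (hrk : G.rank = k) (hmd : HasMinDistGE2 G) {l : Fin n} (hl : 1 ≤ colCount τ l)
    (z : ℕ) : aVN G τ l 0 z = 0 := by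
  simp only [aVN, Pi.zero_apply, Nat.sub_zero, zero_add, eTilde_colCount hrk hmd,
    eTilde_colCount_sub_single hrk hmd hl]
  push_cast
  ring

lemma aVN_single (hrk : G.rank = k) (hmd : HasMinDistGE2 G) {l e : Fin n}
    (hD : {l, e} ≤ univ.val.map τ) (z : ℕ) :
    aVN G τ l (Pi.single e 1) z = weight2Sum G τ l e (fun w => ((k - w).choose (k - z) : ℝ)) := by
  have hpair := eTilde_colCount_sub_pair hrk hmd hD (k - z)
  rw [card_typedPairs] at hpair
  have hpairℝ := congrArg (Nat.cast : ℕ → ℝ) hpair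
  simp only [weight2Sum, Nat.cast_add, Nat.cast_mul, Nat.cast_sum] at hpairℝ
  simp only [aVN, weight2Sum, Pi.single_apply, Nat.sub_right_comm _ (if _ = e then 1 else 0),
    eTilde_colCount_sub_single hrk hmd (one_le_colCount_of_le (e := e) (by simp) hD)]
  push_cast at hpairℝ ⊢
  linear_combination -hpairℝ

lemma single_mem_tRange_iff {l e : Fin n} :
    Pi.single e 1 ∈ tRange (colCount τ) l ↔ {l, e} ≤ univ.val.map τ := by
  simp only [tRange, Fintype.mem_piFinset, mem_range, Multiset.le_iff_count, count_map_univ_val]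
  refine forall_congr' fun m => ?_
  simp only [Pi.single_apply, Multiset.insert_eq_cons, Multiset.count_cons,
    Multiset.count_singleton]
  split_ifs <;> omega

lemma zero_mem_tRange {l : Fin n} (hl : 1 ≤ colCount τ l) : 0 ∈ tRange (colCount τ) l := by
  simp only [tRange, Fintype.mem_piFinset, mem_range, Pi.zero_apply]
  intro m
  split_ifs with h
  · exact h ▸ hl
  · exact Nat.succ_pos _

lemma le_map_val_of_typedPairs_nonempty {e l : Fin n} (h : (typedPairs τ e l).Nonempty) :
    {e, l} ≤ univ.val.map τ := by
  obtain ⟨⟨i, j⟩, hp⟩ := h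
  simp only [typedPairs, mem_filter, mem_univ, true_and] at hp
  rw [← (map_val_eq_pair_iff τ).2 ⟨i, j, hp.1, hp.2.1, hp.2.2, rfl⟩]
  exact Multiset.map_le_map (val_le_iff.2 (subset_univ _))

end Coefficients

section WeightEnumerator

variable {n k q : ℕ} {G : Matrix (Fin k) (Fin q) (ZMod 2)} {τ : Fin q → Fin n}

lemma weight2Sum_congr {e l : Fin n} {f g : ℕ → ℝ} (h : ∀ w ≤ k, f w = g w) :
    weight2Sum G τ e l f = weight2Sum G τ e l g :=
  sum_congr rfl fun _ _ => sum_congr rfl fun x _ => h _ (hWeight_le x)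

lemma sum_mul_weight2Sum {ι : Type*} (s : Finset ι) (c : ι → ℝ) (f : ι → ℕ → ℝ) (e l : Fin n) :
    ∑ i ∈ s, c i * weight2Sum G τ e l (f i)
      = weight2Sum G τ e l (fun w => ∑ i ∈ s, c i * f i w) := by
  simp only [weight2Sum, mul_sum]
  rw [sum_comm]
  exact sum_congr rfl fun _ _ => sum_comm

lemma weight2Sum_eq_zero_of_not_le {e l : Fin n} (h : ¬ {e, l} ≤ univ.val.map τ) (f : ℕ → ℝ) :
    weight2Sum G τ e l f = 0 := by
  rw [weight2Sum, not_nonempty_iff_eq_empty.1 (mt le_map_val_of_typedPairs_nonempty h),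
    sum_empty]

lemma sum_pow_mul_choose_sub_eq_pow (ε : ℝ) {k w : ℕ} (hw : w ≤ k) :
    ∑ z ∈ range (k + 1), ε ^ z * (1 - ε) ^ (k - z) * ((k - w).choose (k - z) : ℝ) = ε ^ w := by
  have hsplit : k + 1 = w + (k - w + 1) := by omega
  rw [hsplit, sum_range_add,
    sum_eq_zero fun z hz => by
      rw [Nat.choose_eq_zero_of_lt (by simp at hz; omega), Nat.cast_zero, mul_zero],
    zero_add]
  have hterm : ∀ i ∈ range (k - w + 1), ε ^ (w + i) * (1 - ε) ^ (k - (w + i))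
      * ((k - w).choose (k - (w + i)) : ℝ)
      = ε ^ w * (ε ^ i * (1 - ε) ^ (k - w - i) * ((k - w).choose i : ℝ)) := fun i hi => by
    rw [mem_range] at hi
    rw [show k - (w + i) = k - w - i by omega, Nat.choose_symm (by omega), pow_add]
    ring
  rw [sum_congr rfl hterm, ← mul_sum, ← add_pow, add_sub_cancel, one_pow, mul_one]

lemma sum_Icc_ite_exists_eq_sum_filter (hrk : G.rank = k) {w : Fin q → ZMod 2} (hw : w ≠ 0)
    (f : ℕ → ℝ) :
    ∑ u ∈ Icc 1 k, (if ∃ x, hWeight x = u ∧ Matrix.vecMul x G = w then f u else 0)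
      = ∑ x ∈ {x | Matrix.vecMul x G = w}, f (hWeight x) := by
  have hinj := vecMul_injective_of_rank_eq (hrk.trans (Fintype.card_fin k).symm)
  by_cases hex : ∃ x₀, Matrix.vecMul x₀ G = w
  · obtain ⟨x₀, hx₀⟩ := hex
    have hx₀ne : x₀ ≠ 0 := by
      rintro rfl
      exact hw (hx₀.symm.trans (Matrix.zero_vecMul G))
    have hfilter : ({x | Matrix.vecMul x G = w} : Finset _) = {x₀} := by
      ext x; simp [← hx₀, hinj.eq_iff]
    have hiff : ∀ u, (∃ x, hWeight x = u ∧ Matrix.vecMul x G = w) ↔ hWeight x₀ = u := fun u =>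
      ⟨fun ⟨x, hxu, hx⟩ => hinj (hx.trans hx₀.symm) ▸ hxu, fun h => ⟨x₀, h, hx₀⟩⟩
    simp only [hiff, hfilter, sum_singleton, sum_ite_eq, mem_Icc]
    rw [if_pos ⟨one_le_hWeight hx₀ne, hWeight_le x₀⟩]
  · push Not at hex
    simp [hex]

lemma sum_chi2_mul_pow (hrk : G.rank = k) (l e : Fin n) (ε : ℝ) :
    ∑ u ∈ Icc 1 k, (chi2 G τ u l e : ℝ) * ε ^ u = weight2Sum G τ l e (ε ^ ·) := by
  have hchi : ∀ u, (chi2 G τ u l e : ℝ) * ε ^ u = ∑ p ∈ typedPairs τ l e,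
      if ∃ x, hWeight x = u ∧ Matrix.vecMul x G = wt2vec p.1 p.2 then ε ^ u else 0 := by
    intro u
    rw [sum_ite, sum_const_zero, add_zero, sum_const, nsmul_eq_mul, chi2, typedPairs,
      filter_filter]
    simp only [and_assoc]
  simp only [hchi, weight2Sum]
  rw [sum_comm]
  exact sum_congr rfl fun p _ => sum_Icc_ite_exists_eq_sum_filter hrk (wt2vec_ne_zero _ _) _

lemma chi2_eq_zero_of_three_le
    (h3 : ∀ x : Fin k → ZMod 2, Matrix.vecMul x G ≠ 0 → 3 ≤ hWeight (Matrix.vecMul x G))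
    (u : ℕ) (l e : Fin n) : chi2 G τ u l e = 0 := by
  rw [chi2, card_eq_zero, filter_eq_empty_iff]
  rintro p - ⟨hne, -, -, x, -, hx⟩
  have := h3 x (hx ▸ wt2vec_ne_zero _ _)
  rw [hx, hWeight_wt2vec hne] at this
  omega

end WeightEnumerator

section Derivative

lemma hasDerivAt_one_sub_pow_mul_pow (a b : ℕ) :
    HasDerivAt (fun x : ℝ => (1 - x) ^ a * x ^ b)
      ((if a = 0 then (b : ℝ) else 0) - if a = 1 then 1 else 0) 1 := by
  have h := (((hasDerivAt_id (1 : ℝ)).const_sub 1).fun_pow a).fun_mul (hasDerivAt_pow b (1 : ℝ))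
  refine h.congr_deriv ?_
  rcases a with _ | _ | a <;> simp

variable {n : ℕ}

lemma hasDerivAt_prod_update_one (a b : Fin n → ℕ) (e : Fin n) :
    HasDerivAt (fun x : ℝ => ∏ m, (1 - Function.update (fun _ => (1 : ℝ)) e x m) ^ a m *
        Function.update (fun _ => (1 : ℝ)) e x m ^ b m)
      (if a = 0 then (b e : ℝ) else if a = Pi.single e 1 then -1 else 0) 1 := by
  have hfun : (fun x : ℝ => ∏ m, (1 - Function.update (fun _ => (1 : ℝ)) e x m) ^ a m *
      Function.update (fun _ => (1 : ℝ)) e x m ^ b m)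
      = fun x => (1 - x) ^ a e * x ^ b e * ∏ m ∈ univ.erase e, (0 : ℝ) ^ a m := by
    funext x
    rw [← mul_prod_erase univ _ (mem_univ e), Function.update_self]
    congr 1
    refine prod_congr rfl fun m hm => ?_
    simp [Function.update_of_ne (ne_of_mem_erase hm)]
  rw [hfun]
  refine ((hasDerivAt_one_sub_pow_mul_pow (a e) (b e)).mul_const _).congr_deriv ?_
  by_cases hrest : ∀ m ≠ e, a m = 0
  · have ha0 : a = 0 ↔ a e = 0 :=
      ⟨fun h => h ▸ rfl, fun h => funext fun m => if hm : m = e then hm ▸ h else hrest m hm⟩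
    have ha1 : a = Pi.single e 1 ↔ a e = 1 :=
      ⟨fun h => h ▸ Pi.single_eq_same e 1, fun h => funext fun m => by
        rcases eq_or_ne m e with rfl | hm <;> simp [*]⟩
    rw [prod_eq_one fun m hm => by rw [hrest m (ne_of_mem_erase hm), pow_zero], mul_one]
    simp only [ha0, ha1]
    split_ifs <;> simp_all
  · push Not at hrest
    obtain ⟨m, hm, ham⟩ := hrest
    have ha0 : a ≠ 0 := fun h => ham (h ▸ rfl)
    have ha1 : a ≠ Pi.single e 1 := fun h => ham (h ▸ Pi.single_eq_of_ne hm 1)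
    rw [prod_eq_zero (mem_erase.2 ⟨hm, mem_univ m⟩) (zero_pow ham), if_neg ha0, if_neg ha1,
      mul_zero]

variable {k q : ℕ} {G : Matrix (Fin k) (Fin q) (ZMod 2)} {τ : Fin q → Fin n}

lemma hasDerivAt_IEV_update_one (l e : Fin n) (ε : ℝ) :
    HasDerivAt (fun x => IEV G τ l (Function.update (fun _ => (1 : ℝ)) e x) ε)
      (-((1 / (colCount τ l : ℝ)) * ∑ z ∈ range (k + 1), ε ^ z * (1 - ε) ^ (k - z) *
        ∑ t ∈ tRange (colCount τ) l,
          (if t = 0 then ((colCount τ e - t e - if e = l then 1 else 0 : ℕ) : ℝ)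
            else if t = Pi.single e 1 then -1 else 0) * aVN G τ l t z)) 1 := by
  unfold IEV
  refine HasDerivAt.const_sub 1 (HasDerivAt.const_mul _ (HasDerivAt.fun_sum fun z _ =>
    HasDerivAt.const_mul _ (HasDerivAt.fun_sum fun t _ => ?_)))
  exact (hasDerivAt_prod_update_one t (fun m => colCount τ m - t m - if m = l then 1 else 0)
    e).mul_const _

lemma sum_tRange_deriv_mul_aVN (hrk : G.rank = k) (hmd : HasMinDistGE2 G) {l : Fin n}
    (hl : 1 ≤ colCount τ l) (e : Fin n) (c : (Fin n → ℕ) → ℝ) (z : ℕ) :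
    ∑ t ∈ tRange (colCount τ) l,
        (if t = 0 then c t else if t = Pi.single e 1 then -1 else 0) * aVN G τ l t z
      = -weight2Sum G τ l e (fun w => ((k - w).choose (k - z) : ℝ)) := by
  have hterm : ∀ t : Fin n → ℕ,
      (if t = 0 then c t else if t = Pi.single e 1 then -1 else 0) * aVN G τ l t z
        = if Pi.single e 1 = t then -aVN G τ l (Pi.single e 1) z else 0 := by
    intro t
    by_cases ht : t = 0
    · subst ht
      rw [aVN_zero hrk hmd hl, mul_zero, if_neg (Pi.single_ne_zero_iff.2 one_ne_zero)]
    · by_cases hts : Pi.single e 1 = t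
      · subst hts
        rw [if_neg ht, if_pos rfl, if_pos rfl, neg_one_mul]
      · rw [if_neg ht, if_neg (Ne.symm hts), if_neg hts, zero_mul]
  rw [sum_congr rfl fun t _ => hterm t, sum_ite_eq]
  split_ifs with hmem
  · rw [aVN_single hrk hmd (single_mem_tRange_iff.1 hmem)]
  · rw [weight2Sum_eq_zero_of_not_le (mt single_mem_tRange_iff.2 hmem), neg_zero]

end Derivative

theorem deriv_IEV_eq_chi_general {n k q : ℕ}
    (G : Matrix (Fin k) (Fin q) (ZMod 2)) (τ : Fin q → Fin n)
    (hrk : G.rank = k) (hmd : HasMinDistGE2 G)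
    (ε : ℝ) (l e : Fin n) (hl : 0 < colCount τ l) :
    deriv (fun x : ℝ => IEV G τ l (Function.update (fun _ => (1 : ℝ)) e x) ε) 1
      = (1 / (colCount τ l : ℝ)) *
          ∑ u ∈ Finset.Icc 1 k, (chi2 G τ u l e : ℝ) * ε ^ u ∧
    ((∀ x : Fin k → ZMod 2, Matrix.vecMul x G ≠ 0 → 3 ≤ hWeight (Matrix.vecMul x G)) →
      deriv (fun x : ℝ => IEV G τ l (Function.update (fun _ => (1 : ℝ)) e x) ε) 1 = 0) := by
  have hderiv : deriv (fun x : ℝ => IEV G τ l (Function.update (fun _ => (1 : ℝ)) e x) ε) 1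
      = (1 / (colCount τ l : ℝ)) * ∑ u ∈ Icc 1 k, (chi2 G τ u l e : ℝ) * ε ^ u := by
    rw [(hasDerivAt_IEV_update_one l e ε).deriv]
    simp only [sum_tRange_deriv_mul_aVN hrk hmd hl, mul_neg, sum_neg_distrib, neg_neg,
      sum_mul_weight2Sum]
    rw [sum_chi2_mul_pow hrk,
      weight2Sum_congr fun w hw => sum_pow_mul_choose_sub_eq_pow ε hw]
  refine ⟨hderiv, fun h3 => ?_⟩
  simp [hderiv, chi2_eq_zero_of_three_le h3]

/-- **Per-type VN derivative formula.** For a VN type with full-rank generator matrix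
whose local code has minimum distance at least `2`, the partial derivative of
`I_{EV,l}^{(γ)}(·,ε)` with respect to its `e`-th argument, evaluated at the all-ones
point, equals `(1/q_{γ,l}) Σ_{u=1}^{k_γ} χ_{2,u}^{(γ)}(l,e) ε^u`; in particular it is `0`
whenever the local code has minimum distance greater than `2`. -/
theorem deriv_IEV_eq_chi {n k q : ℕ} (hn : 1 ≤ n)
    (G : Matrix (Fin k) (Fin q) (ZMod 2)) (τ : Fin q → Fin n)
    (hrk : G.rank = k) (hmd : HasMinDistGE2 G)
    (ε : ℝ) (hε : ε ∈ Set.Ioo (0 : ℝ) 1) (l e : Fin n) (hl : 0 < colCount τ l) :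
    deriv (fun x : ℝ => IEV G τ l (Function.update (fun _ => (1 : ℝ)) e x) ε) 1
      = (1 / (colCount τ l : ℝ)) *
          ∑ u ∈ Finset.Icc 1 k, (chi2 G τ u l e : ℝ) * ε ^ u ∧
    ((∀ x : Fin k → ZMod 2, Matrix.vecMul x G ≠ 0 → 3 ≤ hWeight (Matrix.vecMul x G)) →
      deriv (fun x : ℝ => IEV G τ l (Function.update (fun _ => (1 : ℝ)) e x) ε) 1 = 0) :=
  deriv_IEV_eq_chi_general G τ hrk hmd ε l e hl

end MET
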